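/- arXiv:1902.01891 — 3 statements merged into one kernel-verified Lean document; each statement's English description precedes it below -/
import Mathlib

section
/- Let F be a field with char(F) ≠ 2. For every n ≥ 1, the polynomial z_1 z_2 ⋯ z_{2n} belongs to Id(UT_2(F), ⋆) + ⟨z_1z_2⟩^{TS(*)}. -/
open scoped BigOperators

set_option maxHeartbeats 1000000
set_option synthInstance.maxHeartbeats 400000

/-- The algebra of 2×2 upper triangular matrices over `F`. -/
def UT2 (F : Type*) [Field F] : Subalgebra F (Matrix (Fin 2) (Fin 2) F) where
  carrier := {M | M 1 0 = 0}
  mul_mem' := by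
    intro a b ha hb
    simp only [Set.mem_setOf_eq] at *
    rw [Matrix.mul_apply, Fin.sum_univ_two, ha, hb]
    ring
  one_mem' := by simp [Matrix.one_apply]
  add_mem' := by
    intro a b ha hb
    simp only [Set.mem_setOf_eq] at *
    simp [Matrix.add_apply, ha, hb]
  zero_mem' := by simp
  algebraMap_mem' := by
    intro r
    simp [Matrix.algebraMap_matrix_apply]

theorem mem_UT2 (F : Type*) [Field F] {M : Matrix (Fin 2) (Fin 2) F} :
    M ∈ UT2 F ↔ M 1 0 = 0 := Iff.rfl

/-- The involution `⋆` on `UT2 F`: `(a c; 0 b) ↦ (b c; 0 a)`. -/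
def starUT (F : Type*) [Field F] (M : ↥(UT2 F)) : ↥(UT2 F) :=
  ⟨!![M.1 1 1, M.1 0 1; 0, M.1 0 0], by rw [mem_UT2]; simp⟩

/-- The involution `s` on `UT2 F`: `(a c; 0 b) ↦ (b -c; 0 a)`. -/
def starS (F : Type*) [Field F] (M : ↥(UT2 F)) : ↥(UT2 F) :=
  ⟨!![M.1 1 1, -(M.1 0 1); 0, M.1 0 0], by rw [mem_UT2]; simp⟩

/-- The free unital associative `F`-algebra `F⟨Y ∪ Z⟩` on the variables
`y_0, y_1, …` (indexed by `Sum.inl`) and `z_0, z_1, …` (indexed by `Sum.inr`). -/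
abbrev FA (F : Type*) [Field F] := FreeAlgebra F (ℕ ⊕ ℕ)

noncomputable def yv (F : Type*) [Field F] (i : ℕ) : FA F := FreeAlgebra.ι F (Sum.inl i)
noncomputable def zv (F : Type*) [Field F] (i : ℕ) : FA F := FreeAlgebra.ι F (Sum.inr i)

noncomputable def fStarAux (F : Type*) [Field F] : FA F →ₐ[F] (FA F)ᵐᵒᵖ :=
  FreeAlgebra.lift F fun v =>
    MulOpposite.op (Sum.elim (fun i => FreeAlgebra.ι F (Sum.inl i))
      (fun i => -FreeAlgebra.ι F (Sum.inr i)) v)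

/-- The involution `*` on `F⟨Y ∪ Z⟩`: the unique `F`-linear anti-automorphism
with `y_i* = y_i` and `z_i* = -z_i`. -/
noncomputable def fStar (F : Type*) [Field F] (f : FA F) : FA F := (fStarAux F f).unop

/-- A symmetric polynomial of `F⟨Y ∪ Z⟩`. -/
def IsSym (F : Type*) [Field F] (f : FA F) : Prop := fStar F f = f
/-- A skew polynomial of `F⟨Y ∪ Z⟩`. -/
def IsSkew (F : Type*) [Field F] (f : FA F) : Prop := fStar F f = -f

/-- A substitution relative to an involution `σ` on `UT2 F`: an algebra homomorphism
sending each `y_i` to a symmetric element and each `z_i` to a skew-symmetric element. -/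
def IsSubstWith (F : Type*) [Field F] (σ : ↥(UT2 F) → ↥(UT2 F))
    (φ : FA F →ₐ[F] ↥(UT2 F)) : Prop :=
  (∀ i, σ (φ (yv F i)) = φ (yv F i)) ∧ (∀ i, σ (φ (zv F i)) = -(φ (zv F i)))

/-- The `*`-polynomial identities of `(UT2 F, σ)`. -/
def IdWith (F : Type*) [Field F] (σ : ↥(UT2 F) → ↥(UT2 F)) : Submodule F (FA F) where
  carrier := {f | ∀ φ : FA F →ₐ[F] ↥(UT2 F), IsSubstWith F σ φ → φ f = 0}
  add_mem' := by
    intro a b ha hb φ hφ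
    rw [map_add, ha φ hφ, hb φ hφ, add_zero]
  zero_mem' := by intro φ _; exact map_zero φ
  smul_mem' := by
    intro c x hx φ hφ
    rw [map_smul, hx φ hφ, smul_zero]

/-- The `*`-central polynomials of `(UT2 F, σ)`. -/
def CWith (F : Type*) [Field F] (σ : ↥(UT2 F) → ↥(UT2 F)) : Submodule F (FA F) where
  carrier := {f | ∀ φ : FA F →ₐ[F] ↥(UT2 F), IsSubstWith F σ φ →
    φ f ∈ Subalgebra.center F ↥(UT2 F)}
  add_mem' := by
    intro a b ha hb φ hφ
    rw [map_add]; exact add_mem (ha φ hφ) (hb φ hφ)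
  zero_mem' := by intro φ _; rw [map_zero]; exact zero_mem _
  smul_mem' := by
    intro c x hx φ hφ
    rw [map_smul]; exact Subalgebra.smul_mem _ (hx φ hφ) c

/-- `⟨z₁z₂⟩^{TS(*)}`: the `F`-linear span of all products of two skew polynomials. -/
def TSz (F : Type*) [Field F] : Submodule F (FA F) :=
  Submodule.span F {f : FA F | ∃ u v, IsSkew F u ∧ IsSkew F v ∧ f = u * v}

/-! Write `m = z₂ ⋯ z₂ₙ` and `r` for the reversed product. Since `m` has odd length,
`m* = -r`, so `m + r` is skew and `z₁ (m + r) ∈ ⟨z₁z₂⟩^{TS(*)}`. Skew elements of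
`(UT₂(F), ⋆)` are the matrices `diag(a, -a)`, which commute with each other; hence every
substitution sends `m` and `r` to the same matrix and `z₁ (m - r)` is an identity.
Halving (char `F ≠ 2`) gives `z₁ m = ½ z₁ (m - r) + ½ z₁ (m + r)`. -/

section FreeStar

variable {F : Type*} [Field F]

lemma fStar_mul (a b : FA F) : fStar F (a * b) = fStar F b * fStar F a := by
  simp [fStar]

lemma fStar_add (a b : FA F) : fStar F (a + b) = fStar F a + fStar F b := by
  simp [fStar]

lemma fStar_smul (c : F) (a : FA F) : fStar F (c • a) = c • fStar F a := by
  simp [fStar]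

lemma isSkew_zv (i : ℕ) : IsSkew F (zv F i) := by
  simp [IsSkew, fStar, fStarAux, zv]

lemma fStar_list_prod_of_isSkew {l : List (FA F)} (hl : ∀ u ∈ l, IsSkew F u) :
    fStar F l.prod = (-1 : F) ^ l.length • l.reverse.prod := by
  induction l with
  | nil => simp [fStar]
  | cons a t ih =>
    rw [List.prod_cons, fStar_mul, ih fun u hu => hl u (List.mem_cons_of_mem a hu),
      hl a List.mem_cons_self]
    simp [pow_succ, mul_comm]

lemma fStar_list_prod_of_isSkew_of_odd {l : List (FA F)} (hl : ∀ u ∈ l, IsSkew F u)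
    (hodd : Odd l.length) : fStar F l.prod = -l.reverse.prod := by
  rw [fStar_list_prod_of_isSkew hl, hodd.neg_one_pow, neg_one_smul]

lemma mul_mem_TSz {u v : FA F} (hu : IsSkew F u) (hv : IsSkew F v) : u * v ∈ TSz F :=
  Submodule.subset_span ⟨u, v, hu, hv, rfl⟩

lemma mul_mem_IdWith (σ : ↥(UT2 F) → ↥(UT2 F)) (a : FA F) {f : FA F}
    (hf : f ∈ IdWith F σ) : a * f ∈ IdWith F σ := by
  intro φ hφ
  rw [map_mul, hf φ hφ, mul_zero]

lemma mul_mem_IdWith_sup_TSz (σ : ↥(UT2 F) → ↥(UT2 F)) (h2 : (2 : F) ≠ 0)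
    {u m r : FA F} (hu : IsSkew F u) (hm : fStar F m = -r) (hr : fStar F r = -m)
    (hid : m - r ∈ IdWith F σ) : u * m ∈ IdWith F σ ⊔ TSz F := by
  have hskew : IsSkew F ((2 : F)⁻¹ • (m + r)) := by
    rw [IsSkew, fStar_smul, fStar_add, hm, hr, ← neg_add, add_comm, smul_neg]
  have hsplit : u * m = (2 : F)⁻¹ • (u * (m - r)) + u * ((2 : F)⁻¹ • (m + r)) := by
    rw [mul_smul_comm, ← smul_add, ← mul_add, sub_add_add_cancel, ← two_smul F m,
      mul_smul_comm, smul_smul, inv_mul_cancel₀ h2, one_smul]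
  rw [hsplit]
  exact add_mem (Submodule.mem_sup_left (Submodule.smul_mem _ _ (mul_mem_IdWith σ u hid)))
    (Submodule.mem_sup_right (mul_mem_TSz hu hskew))

end FreeStar

section SkewUT2

variable {F : Type*} [Field F]

lemma entries_of_starUT_eq_neg (h2 : (2 : F) ≠ 0) {A : ↥(UT2 F)} (hA : starUT F A = -A) :
    A.1 0 1 = 0 ∧ A.1 1 1 = -A.1 0 0 := by
  have hv := congrArg Subtype.val hA
  have h01 : A.1 0 1 = -A.1 0 1 := by simpa [starUT] using congrFun (congrFun hv 0) 1
  have h00 : A.1 1 1 = -A.1 0 0 := by simpa [starUT] using congrFun (congrFun hv 0) 0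
  refine ⟨?_, h00⟩
  have : (2 : F) * A.1 0 1 = 0 := by linear_combination h01
  exact (mul_eq_zero.mp this).resolve_left h2

lemma commute_of_starUT_eq_neg (h2 : (2 : F) ≠ 0) {A B : ↥(UT2 F)}
    (hA : starUT F A = -A) (hB : starUT F B = -B) : Commute A B := by
  obtain ⟨hA01, hA11⟩ := entries_of_starUT_eq_neg h2 hA
  obtain ⟨hB01, hB11⟩ := entries_of_starUT_eq_neg h2 hB
  have hA10 : A.1 1 0 = 0 := A.2
  have hB10 : B.1 1 0 = 0 := B.2
  refine Subtype.ext (Matrix.ext fun i j => ?_)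
  fin_cases i <;> fin_cases j <;>
    simp [Matrix.mul_apply, hA01, hA10, hB01, hB10, hA11, hB11] <;> ring

lemma IsSubstWith.map_prod_reverse (h2 : (2 : F) ≠ 0) {φ : FA F →ₐ[F] ↥(UT2 F)}
    (hφ : IsSubstWith F (starUT F) φ) (l : List ℕ) :
    φ (l.reverse.map (zv F)).prod = φ (l.map (zv F)).prod := by
  rw [map_list_prod, map_list_prod, List.map_reverse, List.map_reverse]
  refine List.Perm.prod_eq' (List.reverse_perm _) (List.pairwise_of_forall_mem_list ?_)
  simp only [List.mem_reverse, List.mem_map]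
  rintro _ ⟨_, ⟨i, -, rfl⟩, rfl⟩ _ ⟨_, ⟨j, -, rfl⟩, rfl⟩
  exact commute_of_starUT_eq_neg h2 (hφ.2 i) (hφ.2 j)

end SkewUT2

lemma zv_mul_prod_mem_IdWith_sup_TSz {F : Type*} [Field F] (h2 : (2 : F) ≠ 0) (i : ℕ)
    {l : List ℕ} (hl : Odd l.length) :
    zv F i * (l.map (zv F)).prod ∈ IdWith F (starUT F) ⊔ TSz F := by
  have hskew : ∀ u ∈ l.map (zv F), IsSkew F u := by
    simp only [List.mem_map]
    rintro _ ⟨j, -, rfl⟩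
    exact isSkew_zv j
  have hskew_rev : ∀ u ∈ (l.map (zv F)).reverse, IsSkew F u :=
    fun u hu => hskew u (List.mem_reverse.mp hu)
  refine mul_mem_IdWith_sup_TSz (starUT F) h2 (isSkew_zv i) (r := (l.reverse.map (zv F)).prod)
    ?_ ?_ ?_
  · rw [fStar_list_prod_of_isSkew_of_odd hskew (by simpa using hl), List.map_reverse]
  · rw [List.map_reverse, fStar_list_prod_of_isSkew_of_odd hskew_rev (by simpa using hl),
      List.reverse_reverse]
  · intro φ hφ
    rw [map_sub, hφ.map_prod_reverse h2, sub_self]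

theorem stmt_6 (F : Type*) [Field F] (hchar : ringChar F ≠ 2) (n : ℕ) (hn : 1 ≤ n) :
    (List.ofFn fun i : Fin (2 * n) => zv F i).prod ∈ IdWith F (starUT F) ⊔ TSz F := by
  obtain ⟨k, hk⟩ : ∃ k, 2 * n = k + 1 := ⟨2 * n - 1, by omega⟩
  have hodd : Odd k := by rw [Nat.odd_iff]; omega
  have hprod : (List.ofFn fun i : Fin (2 * n) => zv F i).prod
      = zv F 0 * ((List.ofFn fun i : Fin k => (i : ℕ) + 1).map (zv F)).prod := by
    rw [hk, List.ofFn_succ, List.prod_cons, List.map_ofFn]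
    rfl
  rw [hprod]
  exact zv_mul_prod_mem_IdWith_sup_TSz (Ring.two_ne_zero hchar) 0 (by simpa using hodd)
end

section
/- Let F be a finite field with |F| = q elements and char(F) ≠ 2, and let f = Σ_{i=0}^{2q−1} α_i y_1^i ∈ F⟨Y∪Z⟩ with α_0, …, α_{2q−1} ∈ F. If f ∈ C(UT_2(F), ⋆), then f ∈ V + Id(UT_2(F), ⋆). -/
open scoped BigOperators

set_option maxHeartbeats 1000000
set_option synthInstance.maxHeartbeats 400000

/-- `V`: the `F`-linear span of all polynomials
`l·g₁(g₂^{q+l-1} - g₂^l) + g₁^q g₂^l` with `l ∈ ℕ` and `g₁, g₂` symmetric. -/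
def Vspan (F : Type*) [Field F] (q : ℕ) : Submodule F (FA F) :=
  Submodule.span F {f : FA F | ∃ l : ℕ, ∃ g₁ g₂, IsSym F g₁ ∧ IsSym F g₂ ∧
    f = (l : F) • (g₁ * (g₂ ^ (q + l - 1) - g₂ ^ l)) + g₁ ^ q * g₂ ^ l}

/-!
Substituting `y₀ ↦ (a 1; 0 a)`, which is `⋆`-symmetric, sends `f = ∑ αᵢ y₀ⁱ` to a matrix whose
corner entry is `f'(a)`, so centrality forces `f'` to vanish on `F`. Reducing `f'`, of degree
`< 2q - 1`, by `a^q = a` leaves a polynomial of degree `< q` vanishing on `F`; its coefficients give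
`α₁ = 0` and `(j + 2) α_{j+2} + (j + 1) α_{q+j+1} = 0` for `j < q - 1`. Then
`α_{j+2} y₀^{j+2} + α_{q+j+1} y₀^{q+j+1}` is a multiple of the generator of `V` with `g₁ = 1`,
`g₂ = y₀`, `l = j + 2` (or of `y₀^{j+2}` itself when `j + 2 = 0` in `F`), and `α₀` is a multiple of
the generator with `l = 0`.
-/

open Polynomial in
theorem eq_zero_of_forall_sum_range_card_mul_pow_eq_zero {K : Type*} [Field K] [Fintype K]
    (d : ℕ → K) (h : ∀ a : K, ∑ k ∈ Finset.range (Fintype.card K), d k * a ^ k = 0)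
    {k : ℕ} (hk : k < Fintype.card K) : d k = 0 := by
  set p : K[X] := ∑ i ∈ Finset.range (Fintype.card K), C (d i) * X ^ i
  have hdeg : p.natDegree < Fintype.card K :=
    (natDegree_sum_le_of_forall_le _ _ fun i hi =>
      (natDegree_C_mul_X_pow_le _ _).trans (Nat.le_pred_of_lt (Finset.mem_range.mp hi))).trans_lt
      (Nat.pred_lt Fintype.card_ne_zero)
  have hp : p = 0 :=
    eq_zero_of_natDegree_lt_card_of_eval_eq_zero p Function.injective_id
      (fun a => by simpa [p, eval_finsetSum] using h a) hdeg
  simpa [p, finsetSum_coeff, coeff_C_mul_X_pow, hk] using congrArg (coeff · k) hp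

theorem sum_range_mul_pow_eq_of_pow_succ_eq {R : Type*} [CommSemiring R] {n : ℕ} {a : R}
    (ha : a ^ (n + 1) = a) (c : ℕ → R) :
    ∑ k ∈ Finset.range (2 * n + 1), c k * a ^ k =
      ∑ k ∈ Finset.range (n + 1), (c k + if k = 0 then 0 else c (n + k)) * a ^ k := by
  rw [show 2 * n + 1 = n + 1 + n by ring, Finset.sum_range_add]
  simp only [add_mul, Finset.sum_add_distrib, ite_mul, zero_mul]
  congr 1
  rw [Finset.sum_range_succ']
  refine (add_zero _).symm.trans (congrArg₂ _ (Finset.sum_congr rfl fun j _ => ?_) rfl)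
  rw [if_neg j.succ_ne_zero, pow_add, ha, ← pow_succ', add_assoc, add_comm 1]

theorem coeff_relations_of_forall_derivative_eval_eq_zero {K : Type*} [Field K] [Fintype K]
    {n : ℕ} (hn : Fintype.card K = n + 1) (α : ℕ → K)
    (h : ∀ a : K, ∑ i ∈ Finset.range (2 * n + 2), α i * (i * a ^ (i - 1)) = 0) :
    α 1 = 0 ∧ ∀ j < n, ((j : K) + 2) * α (j + 2) + ((j : K) + 1) * α (n + j + 2) = 0 := by
  set c : ℕ → K := fun k => ((k : K) + 1) * α (k + 1)
  have hd : ∀ a : K, ∑ k ∈ Finset.range (Fintype.card K),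
      (c k + if k = 0 then 0 else c (n + k)) * a ^ k = 0 := fun a => by
    rw [hn, ← sum_range_mul_pow_eq_of_pow_succ_eq (hn ▸ FiniteField.pow_card a), ← h a,
      Finset.sum_range_succ' _ (2 * n + 1)]
    simp [c, mul_assoc, mul_left_comm]
  have hn0 : (n : K) + 1 = 0 := by exact_mod_cast hn ▸ FiniteField.cast_card_eq_zero K
  constructor
  · simpa [c] using eq_zero_of_forall_sum_range_card_mul_pow_eq_zero _ hd (k := 0) (by omega)
  · intro j hj
    have hj1 := eq_zero_of_forall_sum_range_card_mul_pow_eq_zero _ hd (k := j + 1) (by omega)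
    simp only [c, if_neg j.succ_ne_zero] at hj1
    push_cast at hj1
    linear_combination hj1 - α (n + j + 2) * hn0

theorem pow_upperTriangular {R : Type*} [CommRing R] (a b : R) (i : ℕ) :
    !![a, b; 0, a] ^ i = !![a ^ i, i * a ^ (i - 1) * b; 0, a ^ i] := by
  induction i with
  | zero => simp [Matrix.one_fin_two]
  | succ i ih =>
    rw [pow_succ, ih, Matrix.mul_fin_two]
    rcases i with _ | i
    · simp
    · simp only [mul_zero, add_zero, Nat.add_sub_cancel, pow_succ]
      push_cast
      ring_nf

section UT2

variable (F : Type*) [Field F]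

theorem UT2_apply_zero_one_eq_zero_of_mem_center {m : ↥(UT2 F)}
    (hm : m ∈ Subalgebra.center F ↥(UT2 F)) : (m : Matrix (Fin 2) (Fin 2) F) 0 1 = 0 := by
  have hE : !![(1 : F), 0; 0, 0] ∈ UT2 F := by rw [mem_UT2]; simp
  have h := congrArg (fun x : ↥(UT2 F) => x.1 0 1) ((Subalgebra.mem_center_iff.mp hm) ⟨_, hE⟩)
  simpa [Matrix.mul_apply, Fin.sum_univ_two] using h

theorem starUT_zero : starUT F 0 = 0 :=
  Subtype.ext (by ext i j; fin_cases i <;> fin_cases j <;> rfl)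

noncomputable def evalY0 (M : ↥(UT2 F)) : FA F →ₐ[F] ↥(UT2 F) :=
  FreeAlgebra.lift F (Sum.elim (fun i => if i = 0 then M else 0) 0)

@[simp]
theorem evalY0_yv_zero (M : ↥(UT2 F)) : evalY0 F M (yv F 0) = M := by
  simp [evalY0, yv]

theorem isSubstWith_evalY0 {M : ↥(UT2 F)} (hM : starUT F M = M) :
    IsSubstWith F (starUT F) (evalY0 F M) := by
  refine ⟨fun i => ?_, fun i => ?_⟩
  · by_cases hi : i = 0 <;> simp [evalY0, yv, hi, hM, starUT_zero]
  · simp [evalY0, zv, starUT_zero]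

theorem sum_derivative_eq_zero_of_mem_CWith (α : ℕ → F) (N : ℕ)
    (hc : ∑ i ∈ Finset.range N, α i • yv F 0 ^ i ∈ CWith F (starUT F)) (a : F) :
    ∑ i ∈ Finset.range N, α i * (i * a ^ (i - 1)) = 0 := by
  let M : ↥(UT2 F) := ⟨!![a, 1; 0, a], by rw [mem_UT2]; simp⟩
  have hM : starUT F M = M := Subtype.ext (by ext i j; fin_cases i <;> fin_cases j <;> rfl)
  have h := UT2_apply_zero_one_eq_zero_of_mem_center F (hc _ (isSubstWith_evalY0 F hM))
  simpa [M, Matrix.sum_apply, pow_upperTriangular] using h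

end UT2

section Vspan

variable {F : Type*} [Field F]

theorem isSym_one : IsSym F 1 := by
  simp [IsSym, fStar]

theorem isSym_yv (i : ℕ) : IsSym F (yv F i) := by
  simp [IsSym, fStar, fStarAux, yv]

variable {q : ℕ} {g : FA F}

theorem add_pow_mem_Vspan (hg : IsSym F g) (l : ℕ) :
    (l : F) • (g ^ (q + l - 1) - g ^ l) + g ^ l ∈ Vspan F q :=
  Submodule.subset_span ⟨l, 1, g, isSym_one, hg, by simp⟩

theorem pow_mem_Vspan_of_natCast_eq_zero (hg : IsSym F g) {n : ℕ} (hn : (n : F) = 0) :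
    g ^ n ∈ Vspan F q := by
  simpa [hn] using add_pow_mem_Vspan (q := q) hg n

theorem smul_pow_add_smul_pow_mem_Vspan (hg : IsSym F g) (j : ℕ) {A B : F}
    (hAB : ((j : F) + 2) * A + ((j : F) + 1) * B = 0) :
    A • g ^ (j + 2) + B • g ^ (q + j + 1) ∈ Vspan F q := by
  by_cases hj : (j : F) + 2 = 0
  · have hB : B = 0 := by linear_combination (A + B) * hj - hAB
    rw [hB, zero_smul, add_zero]
    exact Submodule.smul_mem _ _ (pow_mem_Vspan_of_natCast_eq_zero hg (by push_cast; exact hj))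
  · have hu := add_pow_mem_Vspan (q := q) hg (j + 2)
    rw [show q + (j + 2) - 1 = q + j + 1 by omega] at hu
    convert Submodule.smul_mem _ (B / ((j : F) + 2)) hu using 1
    push_cast
    match_scalars
    · field_simp
      linear_combination hAB
    · field_simp

end Vspan

theorem Finset.sum_range_two_mul_add_two {M : Type*} [AddCommMonoid M] (g : ℕ → M) (n : ℕ) :
    ∑ i ∈ Finset.range (2 * n + 2), g i =
      g 0 + g 1 + ∑ j ∈ Finset.range n, (g (j + 2) + g (n + j + 2)) := by
  rw [Finset.sum_range_succ', Finset.sum_range_succ', two_mul, Finset.sum_range_add,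
    Finset.sum_add_distrib]
  simp only [add_assoc, zero_add]
  abel

theorem stmt_14_general (F : Type*) [Field F] [Fintype F] (q : ℕ) (hq : Fintype.card F = q)
    (α : ℕ → F)
    (f : FA F) (hf : f = ∑ i ∈ Finset.range (2 * q), α i • (yv F 0) ^ i)
    (hc : f ∈ CWith F (starUT F)) :
    f ∈ Vspan F q ⊔ IdWith F (starUT F) := by
  obtain ⟨n, rfl⟩ : ∃ n, q = n + 1 := Nat.exists_eq_add_one.mpr (hq ▸ Fintype.card_pos)
  subst hf
  obtain ⟨hα₁, hpair⟩ := coeff_relations_of_forall_derivative_eval_eq_zero hq α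
    (sum_derivative_eq_zero_of_mem_CWith F α _ hc)
  refine Submodule.mem_sup_left ?_
  rw [show 2 * (n + 1) = 2 * n + 2 by ring, Finset.sum_range_two_mul_add_two]
  refine add_mem (add_mem ?_ ?_) (Submodule.sum_mem _ fun j hj => ?_)
  · simpa using Submodule.smul_mem _ (α 0)
      (pow_mem_Vspan_of_natCast_eq_zero (q := n + 1) (isSym_yv 0) Nat.cast_zero)
  · simp [hα₁]
  · have h := smul_pow_add_smul_pow_mem_Vspan (q := n + 1) (isSym_yv 0) j
      (hpair j (Finset.mem_range.mp hj))
    rwa [show n + 1 + j + 1 = n + j + 2 by ring] at h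

theorem stmt_14 (F : Type*) [Field F] [Fintype F] (q : ℕ) (hq : Fintype.card F = q)
    (hchar : ringChar F ≠ 2) (α : ℕ → F)
    (f : FA F) (hf : f = ∑ i ∈ Finset.range (2 * q), α i • (yv F 0) ^ i)
    (hc : f ∈ CWith F (starUT F)) :
    f ∈ Vspan F q ⊔ IdWith F (starUT F) :=
  stmt_14_general F q hq α f hf hc
end

section
/- Let F be a finite field with |F| = q elements and char(F) = p ≠ 2. For every Y ∈ UT_2(F) symmetric for ⋆, one has Y^{pq} = Y^p. -/
open scoped BigOperators

set_option maxHeartbeats 1000000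
set_option synthInstance.maxHeartbeats 400000

/-! A `⋆`-symmetric element of `UT₂(F)` is a scalar `a` plus the square-zero matrix `c e₁₂`.
In characteristic `p` the Frobenius map is additive on commuting elements and kills `c e₁₂`,
so `Y ^ p` is the scalar `a ^ p`, which is fixed by `x ↦ x ^ q`. -/

theorem add_pow_char_of_sq_eq_zero {R : Type*} [Semiring R] (p : ℕ) [Fact p.Prime] [CharP R p]
    {x n : R} (hxn : Commute x n) (hn : n ^ 2 = 0) : (x + n) ^ p = x ^ p := by
  have hnp : n ^ p = 0 := by
    rw [← Nat.sub_add_cancel (Fact.out : p.Prime).two_le, pow_add, hn, mul_zero]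
  rw [add_pow_char_of_commute p hxn, hnp, add_zero]

theorem algebraMap_add_pow_char_mul_card {F A : Type*} [Field F] [Fintype F] [Semiring A]
    [Algebra F A] (p : ℕ) [Fact p.Prime] [CharP A p] (a : F) {n : A} (hn : n ^ 2 = 0) :
    (algebraMap F A a + n) ^ (p * Fintype.card F) = (algebraMap F A a + n) ^ p := by
  have hcomm := Algebra.commute_algebraMap_left a n
  rw [pow_mul, add_pow_char_of_sq_eq_zero p hcomm hn, ← map_pow, ← map_pow,
    FiniteField.pow_card]

theorem single_zero_one_sq_eq_zero {α : Type*} [Semiring α] (c : α) :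
    Matrix.single (0 : Fin 2) (1 : Fin 2) c ^ 2 = 0 := by
  rw [sq, Matrix.single_mul_single_of_ne _ _ _ _ (by decide)]

theorem coe_eq_algebraMap_add_single_of_starUT_eq_self {F : Type*} [Field F] {Y : UT2 F}
    (hY : starUT F Y = Y) :
    (Y : Matrix (Fin 2) (Fin 2) F) =
      algebraMap F _ (Y.1 0 0) + Matrix.single 0 1 (Y.1 0 1) := by
  have h10 : Y.1 1 0 = 0 := Y.2
  have h11 : Y.1 1 1 = Y.1 0 0 := by
    simpa [starUT] using congrFun (congrFun (congrArg Subtype.val hY) 0) 0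
  ext i j
  fin_cases i <;> fin_cases j <;> simp [Matrix.algebraMap_matrix_apply, h10, h11]

theorem stmt_15_general (F : Type*) [Field F] [Fintype F] (q : ℕ) (hq : Fintype.card F = q)
    (p : ℕ) [CharP F p]
    (Y : ↥(UT2 F)) (hY : starUT F Y = Y) :
    Y ^ (p * q) = Y ^ p := by
  have : Fact p.Prime := ⟨CharP.char_is_prime F p⟩
  apply Subtype.ext
  rw [SubmonoidClass.coe_pow, SubmonoidClass.coe_pow,
    coe_eq_algebraMap_add_single_of_starUT_eq_self hY, ← hq]
  exact algebraMap_add_pow_char_mul_card p _ (single_zero_one_sq_eq_zero _)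

theorem stmt_15 (F : Type*) [Field F] [Fintype F] (q : ℕ) (hq : Fintype.card F = q)
    (p : ℕ) [CharP F p] (hp : p ≠ 2)
    (Y : ↥(UT2 F)) (hY : starUT F Y = Y) :
    Y ^ (p * q) = Y ^ p :=
  stmt_15_general F q hq p Y hY
end
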